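/- arXiv:2502.20991 — 9 statements merged into one kernel-verified Lean document; each statement's English description precedes it below -/
import Mathlib

section
/- In any information frame, the strong cut rule holds: for all tokens a, i, j, all X ∈ Con_i and Y ∈ Con_j, if X ⊢_i ({j} ∪ Y) and Y ⊢_j a, then X ⊢_i a. -/
/-- The data `(Con, Ent)` on token set `A` forms an information frame.
`Con i` is the set of finite sets of tokens consistent with `i`, and
`Ent i X a` means `X ⊢ᵢ a`.  The accessibility relation is `i R j ↔ {i} ∈ Con j`. -/
structure IsInfoFrame {A : Type*} [DecidableEq A]
    (Con : A → Set (Finset A)) (Ent : A → Finset A → A → Prop) : Prop where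
  self_con : ∀ i : A, ({i} : Finset A) ∈ Con i
  con_down : ∀ (i : A) (X Y : Finset A), Y ⊆ X → X ∈ Con i → Y ∈ Con i
  sound : ∀ (i : A) (X Y : Finset A), X ∈ Con i → (∀ b ∈ Y, Ent i X b) → Y ∈ Con i
  weaken : ∀ (i : A) (X Y : Finset A) (a : A),
    X ∈ Con i → Y ∈ Con i → X ⊆ Y → Ent i X a → Ent i Y a
  cut : ∀ (i : A) (X Y : Finset A) (a : A),
    X ∈ Con i → (∀ b ∈ Y, Ent i X b) → Ent i Y a → Ent i X a
  con_transfer : ∀ i j : A, ({i} : Finset A) ∈ Con j → Con i ⊆ Con j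
  ent_transfer : ∀ (i j : A) (X : Finset A) (a : A),
    ({i} : Finset A) ∈ Con j → X ∈ Con i → Ent i X a → Ent j X a
  interp : ∀ (i : A) (X Y : Finset A), X ∈ Con i → (∀ b ∈ Y, Ent i X b) →
    ∃ (e : A) (Z : Finset A), Z ∈ Con e ∧ (∀ b ∈ insert e Z, Ent i X b) ∧
      (∀ b ∈ Y, Ent e Z b)

/-- Finite consistency of a subset `x` of tokens. -/
def FinConsistent {A : Type*} (Con : A → Set (Finset A)) (x : Set A) : Prop :=
  ∀ F : Finset A, ↑F ⊆ x → ∃ i ∈ x, F ∈ Con i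

/-- Closure of `x` under entailment. -/
def EntClosed {A : Type*} (Con : A → Set (Finset A))
    (Ent : A → Finset A → A → Prop) (x : Set A) : Prop :=
  ∀ i ∈ x, ∀ X : Finset A, ↑X ⊆ x → X ∈ Con i → ∀ a : A, Ent i X a → a ∈ x

/-- Completeness of `x`. -/
def EntComplete {A : Type*} (Con : A → Set (Finset A))
    (Ent : A → Finset A → A → Prop) (x : Set A) : Prop :=
  ∀ a ∈ x, ∃ i ∈ x, ∃ X : Finset A, ↑X ⊆ x ∧ X ∈ Con i ∧ Ent i X a

/-- A (global) state of an information frame. -/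
def IsState {A : Type*} (Con : A → Set (Finset A))
    (Ent : A → Finset A → A → Prop) (x : Set A) : Prop :=
  FinConsistent Con x ∧ EntClosed Con Ent x ∧ EntComplete Con Ent x

theorem IsInfoFrame.singleton_mem_con_of_ent {A : Type*} [DecidableEq A]
    {Con : A → Set (Finset A)} {Ent : A → Finset A → A → Prop} (hF : IsInfoFrame Con Ent)
    {i b : A} {X : Finset A} (hX : X ∈ Con i) (hb : Ent i X b) : ({b} : Finset A) ∈ Con i :=
  hF.sound i X {b} hX (by simpa using hb)

theorem stmt6 {A : Type*} [DecidableEq A] (Con : A → Set (Finset A))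
    (Ent : A → Finset A → A → Prop) (hF : IsInfoFrame Con Ent)
    (a i j : A) (X Y : Finset A) (hX : X ∈ Con i) (hY : Y ∈ Con j)
    (h1 : ∀ b ∈ insert j Y, Ent i X b) (h2 : Ent j Y a) : Ent i X a := by
  -- `X ⊢ᵢ j` makes `j R i`, so `Y ⊢ⱼ a` transfers to `Y ⊢ᵢ a` and ordinary cut applies.
  have hji : ({j} : Finset A) ∈ Con i :=
    hF.singleton_mem_con_of_ent hX (h1 j (Finset.mem_insert_self j Y))
  have hYa : Ent i Y a := hF.ent_transfer j i Y a hji hY h2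
  exact hF.cut i X Y a hX (fun b hb => h1 b (Finset.mem_insert_of_mem hb)) hYa
end

section
/- In any information frame, each local entailment relation is interpolative: for all i ∈ A and finite X, Y ⊆ A with X ∈ Con_i and X ⊢_i Y, there exists Z ∈ Con_i with X ⊢_i Z and Z ⊢_i Y. -/
/-! The global interpolant `Z ∈ Con e` sits at a token `e` with `X ⊢ᵢ e`; soundness makes `{e}`
consistent at `i`, i.e. `e R i`, and the transfer axioms move `Z` and `Z ⊢ₑ Y` from `e` to `i`. -/

namespace IsInfoFrame

variable {A : Type*} [DecidableEq A] {Con : A → Set (Finset A)} {Ent : A → Finset A → A → Prop}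

theorem singleton_mem_con_of_ent_s7 (hF : IsInfoFrame Con Ent) {i e : A} {X : Finset A}
    (hX : X ∈ Con i) (he : Ent i X e) : ({e} : Finset A) ∈ Con i :=
  hF.sound i X {e} hX (by simpa using he)

theorem con_ent_transfer (hF : IsInfoFrame Con Ent) {i e : A} {Z Y : Finset A}
    (hei : ({e} : Finset A) ∈ Con i) (hZ : Z ∈ Con e) (hZY : ∀ b ∈ Y, Ent e Z b) :
    Z ∈ Con i ∧ ∀ b ∈ Y, Ent i Z b :=
  ⟨hF.con_transfer e i hei hZ, fun b hb => hF.ent_transfer e i Z b hei hZ (hZY b hb)⟩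

end IsInfoFrame

theorem stmt7 {A : Type*} [DecidableEq A] (Con : A → Set (Finset A))
    (Ent : A → Finset A → A → Prop) (hF : IsInfoFrame Con Ent)
    (i : A) (X Y : Finset A) (hX : X ∈ Con i) (h : ∀ b ∈ Y, Ent i X b) :
    ∃ Z : Finset A, Z ∈ Con i ∧ (∀ b ∈ Z, Ent i X b) ∧ (∀ b ∈ Y, Ent i Z b) := by
  obtain ⟨e, Z, hZe, hXeZ, hZY⟩ := hF.interp i X Y hX h
  have hei : ({e} : Finset A) ∈ Con i :=
    hF.singleton_mem_con_of_ent_s7 hX (hXeZ e (Finset.mem_insert_self e Z))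
  obtain ⟨hZi, hZYi⟩ := hF.con_ent_transfer hei hZe hZY
  exact ⟨Z, hZi, fun b hb => hXeZ b (Finset.mem_insert_of_mem hb), hZYi⟩
end

section
/- In any information frame, for all i ∈ A and finite X, Y ⊆ A with X ∈ Con_i and X ⊢_i Y, there exists e ∈ A with X ⊢_i e and Y ∈ Con_e. -/
theorem stmt8 {A : Type*} [DecidableEq A] (Con : A → Set (Finset A))
    (Ent : A → Finset A → A → Prop) (hF : IsInfoFrame Con Ent)
    (i : A) (X Y : Finset A) (hX : X ∈ Con i) (h : ∀ b ∈ Y, Ent i X b) :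
    ∃ e : A, Ent i X e ∧ Y ∈ Con e := by
  obtain ⟨e, Z, hZ, hXeZ, hZY⟩ := hF.interp i X Y hX h
  exact ⟨e, hXeZ e (Finset.mem_insert_self e Z), hF.sound e Z Y hZ hZY⟩
end

section
/- For an information frame 𝔸, a subset x ⊆ A satisfies finite consistency and completeness if and only if it satisfies: for every finite F ⊆ x there exist i ∈ x and a finite X ⊆ x with X ∈ Con_i and X ⊢_i F. -/
def Entails {A : Type*} (Con : A → Set (Finset A)) (Ent : A → Finset A → A → Prop) (x : Set A)
    (F : Finset A) : Prop :=
  ∃ i ∈ x, ∃ X : Finset A, ↑X ⊆ x ∧ X ∈ Con i ∧ ∀ b ∈ F, Ent i X b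

section

variable {A : Type*} {Con : A → Set (Finset A)} {Ent : A → Finset A → A → Prop}

theorem IsInfoFrame.ent_of_subset [DecidableEq A] (hF : IsInfoFrame Con Ent) {i j : A}
    {X Y : Finset A} {a : A} (hij : ({i} : Finset A) ∈ Con j) (hX : X ∈ Con i) (hXY : X ⊆ Y)
    (hY : Y ∈ Con j) (h : Ent i X a) : Ent j Y a :=
  hF.weaken j X Y a (hF.con_down j Y X hXY hY) hY hXY (hF.ent_transfer i j X a hij hX h)

variable {x : Set A}

theorem FinConsistent.entails_empty (hx : FinConsistent Con x) : Entails Con Ent x ∅ := by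
  obtain ⟨i, hi, hcon⟩ := hx ∅ (by simp)
  exact ⟨i, hi, ∅, by simp, hcon, by simp⟩

theorem EntComplete.entails_singleton {a : A} (hx : EntComplete Con Ent x) (ha : a ∈ x) :
    Entails Con Ent x {a} := by
  obtain ⟨i, hi, X, hXx, hXc, hXa⟩ := hx a ha
  exact ⟨i, hi, X, hXx, hXc, by simpa using hXa⟩

theorem Entails.union [DecidableEq A] (hF : IsInfoFrame Con Ent) (hx : FinConsistent Con x)
    {F G : Finset A} (hFx : Entails Con Ent x F) (hGx : Entails Con Ent x G) :
    Entails Con Ent x (F ∪ G) := by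
  obtain ⟨i, hi, X, hXx, hXc, hXF⟩ := hFx
  obtain ⟨k, hk, Y, hYx, hYc, hYG⟩ := hGx
  obtain ⟨j, hj, hjc⟩ := hx (X ∪ Y ∪ {i, k}) (by
    simp only [Finset.coe_union, Finset.coe_insert, Finset.coe_singleton]
    exact Set.union_subset (Set.union_subset hXx hYx) (Set.insert_subset hi (by simpa)))
  have hsub : ∀ Z ⊆ X ∪ Y ∪ {i, k}, Z ∈ Con j := fun Z hZ => hF.con_down j _ Z hZ hjc
  have hXY : X ∪ Y ∈ Con j := hsub _ Finset.subset_union_left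
  have hij : ({i} : Finset A) ∈ Con j := hsub _ (by intro; simp_all)
  have hkj : ({k} : Finset A) ∈ Con j := hsub _ (by intro; simp_all)
  refine ⟨j, hj, X ∪ Y, by simpa using Set.union_subset hXx hYx, hXY, fun b hb => ?_⟩
  rcases Finset.mem_union.1 hb with hbF | hbG
  · exact hF.ent_of_subset hij hXc Finset.subset_union_left hXY (hXF b hbF)
  · exact hF.ent_of_subset hkj hYc Finset.subset_union_right hXY (hYG b hbG)

theorem FinConsistent.entails [DecidableEq A] (hF : IsInfoFrame Con Ent)
    (hfc : FinConsistent Con x) (hcomp : EntComplete Con Ent x) {F : Finset A} (hFx : ↑F ⊆ x) :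
    Entails Con Ent x F := by
  induction F using Finset.induction_on with
  | empty => exact hfc.entails_empty
  | insert a F _ ih =>
    rw [Finset.coe_insert, Set.insert_subset_iff] at hFx
    rw [Finset.insert_eq]
    exact (hcomp.entails_singleton hFx.1).union hF hfc (ih hFx.2)

theorem finConsistent_of_entails [DecidableEq A] (hF : IsInfoFrame Con Ent)
    (h : ∀ F : Finset A, ↑F ⊆ x → Entails Con Ent x F) : FinConsistent Con x := by
  intro F hFx
  obtain ⟨i, hi, X, -, hXc, hXF⟩ := h F hFx
  exact ⟨i, hi, hF.sound i X F hXc hXF⟩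

theorem entComplete_of_entails (h : ∀ a ∈ x, Entails Con Ent x {a}) : EntComplete Con Ent x := by
  intro a ha
  obtain ⟨i, hi, X, hXx, hXc, hXa⟩ := h a ha
  exact ⟨i, hi, X, hXx, hXc, hXa a (Finset.mem_singleton_self a)⟩

end

theorem stmt9_general {A : Type*} [DecidableEq A] (Con : A → Set (Finset A))
    (Ent : A → Finset A → A → Prop) (hF : IsInfoFrame Con Ent)
    (x : Set A) :
    (FinConsistent Con x ∧ EntComplete Con Ent x) ↔
      (∀ F : Finset A, ↑F ⊆ x → ∃ i ∈ x, ∃ X : Finset A,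
        ↑X ⊆ x ∧ X ∈ Con i ∧ ∀ b ∈ F, Ent i X b) := by
  constructor
  · rintro ⟨hfc, hcomp⟩ F hFx
    exact hfc.entails hF hcomp hFx
  · intro h
    exact ⟨finConsistent_of_entails hF h,
      entComplete_of_entails fun a ha => h {a} (by simpa using ha)⟩

theorem stmt9 {A : Type*} [DecidableEq A] (Con : A → Set (Finset A))
    (Ent : A → Finset A → A → Prop) (hF : IsInfoFrame Con Ent)
    (x : Set A) (hcl : EntClosed Con Ent x) :
    (FinConsistent Con x ∧ EntComplete Con Ent x) ↔
      (∀ F : Finset A, ↑F ⊆ x → ∃ i ∈ x, ∃ X : Finset A,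
        ↑X ⊆ x ∧ X ∈ Con i ∧ ∀ b ∈ F, Ent i X b) :=
  stmt9_general Con Ent hF x
end

section
/- For global states x, y of an information frame 𝔸, x ≪ y in the dcpo of global states ordered by inclusion if and only if there exist i ∈ A and V ∈ Con_i with {i} ∪ V ⊆ y and V ⊢_i x (i.e., V ⊢_i a for all a ∈ x). -/
section InfoFrame

variable {A : Type*} {Con : A → Set (Finset A)} {Ent : A → Finset A → A → Prop}

def generatedState (Ent : A → Finset A → A → Prop) (i : A) (V : Finset A) : Set A :=
  {a | Ent i V a}

def basicStates (Con : A → Set (Finset A)) (Ent : A → Finset A → A → Prop) (y : Set A) :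
    Set (Set A) :=
  {u | ∃ (i : A) (V : Finset A), V ∈ Con i ∧ insert i (↑V : Set A) ⊆ y ∧
    generatedState Ent i V = u}

lemma EntClosed.generatedState_subset {x : Set A} (hx : EntClosed Con Ent x) {i : A}
    {V : Finset A} (hV : V ∈ Con i) (hVx : insert i (↑V : Set A) ⊆ x) :
    generatedState Ent i V ⊆ x :=
  fun _ ha => hx i (hVx (Set.mem_insert i _)) V (fun _ hb => hVx (Set.mem_insert_of_mem i hb))
    hV _ ha

namespace IsInfoFrame

variable [DecidableEq A]

lemma isState_generatedState (hF : IsInfoFrame Con Ent) {i : A} {V : Finset A}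
    (hV : V ∈ Con i) : IsState Con Ent (generatedState Ent i V) := by
  refine ⟨fun F hF_sub => ?_, fun j hj X hX hXj a ha => ?_, fun a ha => ?_⟩
  · obtain ⟨e, Z, hZ, he, hF_ent⟩ := hF.interp i V F hV hF_sub
    exact ⟨e, he e (Finset.mem_insert_self _ _), hF.sound e Z F hZ hF_ent⟩
  · have hj_con : ({j} : Finset A) ∈ Con i :=
      hF.sound i V {j} hV (by simp only [Finset.mem_singleton, forall_eq]; exact hj)
    exact hF.cut i V X a hV hX (hF.ent_transfer j i X a hj_con hXj ha)
  · obtain ⟨e, Z, hZ, he, ha_ent⟩ :=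
      hF.interp i V {a} hV (by simp only [Finset.mem_singleton, forall_eq]; exact ha)
    exact ⟨e, he e (Finset.mem_insert_self _ _), Z,
      fun b hb => he b (Finset.mem_insert_of_mem hb), hZ, ha_ent a (Finset.mem_singleton_self a)⟩

lemma generatedState_mono (hF : IsInfoFrame Con Ent) {i k : A} {V F : Finset A}
    (hV : V ∈ Con i) (hF_con : F ∈ Con k) (hi : i ∈ F) (hVF : V ⊆ F) :
    generatedState Ent i V ⊆ generatedState Ent k F := by
  intro a ha
  have hi_con : ({i} : Finset A) ∈ Con k :=
    hF.con_down k F {i} (Finset.singleton_subset_iff.2 hi) hF_con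
  exact hF.weaken k V F a (hF.con_down k F V hVF hF_con) hF_con hVF
    (hF.ent_transfer i k V a hi_con hV ha)

lemma isState_of_mem_basicStates (hF : IsInfoFrame Con Ent) {y u : Set A}
    (hu : u ∈ basicStates Con Ent y) : IsState Con Ent u := by
  obtain ⟨i, V, hV, -, rfl⟩ := hu
  exact hF.isState_generatedState hV

lemma directedOn_basicStates (hF : IsInfoFrame Con Ent) {y : Set A}
    (hy : FinConsistent Con y) : DirectedOn (· ⊆ ·) (basicStates Con Ent y) := by
  rintro _ ⟨i, V, hV, hVy, rfl⟩ _ ⟨j, W, hW, hWy, rfl⟩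
  set F := insert i V ∪ insert j W
  have hFy : (↑F : Set A) ⊆ y := by
    simp only [F, Finset.coe_union, Finset.coe_insert]
    exact Set.union_subset hVy hWy
  obtain ⟨k, hky, hF_con⟩ := hy F hFy
  refine ⟨generatedState Ent k F, ⟨k, F, hF_con, Set.insert_subset hky hFy, rfl⟩,
    hF.generatedState_mono hV hF_con (by simp [F]) ?_,
    hF.generatedState_mono hW hF_con (by simp [F]) ?_⟩
  · exact (Finset.subset_insert i V).trans Finset.subset_union_left
  · exact (Finset.subset_insert j W).trans Finset.subset_union_right

end IsInfoFrame

lemma EntComplete.subset_sUnion_basicStates {y : Set A} (hy : EntComplete Con Ent y) :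
    y ⊆ ⋃₀ basicStates Con Ent y := by
  intro a ha
  obtain ⟨i, hiy, X, hXy, hX, ha_ent⟩ := hy a ha
  exact ⟨generatedState Ent i X, ⟨i, X, hX, Set.insert_subset hiy hXy, rfl⟩, ha_ent⟩

end InfoFrame

theorem stmt12_general {A : Type*} [DecidableEq A] (Con : A → Set (Finset A))
    (Ent : A → Finset A → A → Prop) (hF : IsInfoFrame Con Ent)
    (x y : Set A) (hy : IsState Con Ent y) :
    (∀ S : Set (Set A), S.Nonempty → DirectedOn (· ⊆ ·) S →
        (∀ z ∈ S, IsState Con Ent z) → y ⊆ ⋃₀ S → ∃ u ∈ S, x ⊆ u) ↔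
      (∃ (i : A) (V : Finset A), V ∈ Con i ∧ insert i (↑V : Set A) ⊆ y ∧
        ∀ a ∈ x, Ent i V a) := by
  constructor
  · intro hxy
    have hy_cover := hy.2.2.subset_sUnion_basicStates
    -- finite consistency of the empty set yields a token of `y`
    obtain ⟨j, hj, -⟩ := hy.1 ∅ (Finset.coe_empty ▸ Set.empty_subset y)
    obtain ⟨_, ⟨i, V, hV, hVy, rfl⟩, hxu⟩ :=
      hxy _ (Set.Nonempty.of_sUnion ⟨j, hy_cover hj⟩) (hF.directedOn_basicStates hy.1)
        (fun _ => hF.isState_of_mem_basicStates) hy_cover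
    exact ⟨i, V, hV, hVy, hxu⟩
  · rintro ⟨i, V, hV, hVy, hxV⟩ S hS_ne hS_dir hS_states hyS
    obtain ⟨u, huS, hVu⟩ := hS_dir.exists_mem_subset_of_finite_of_subset_sUnion hS_ne
      (V.finite_toSet.insert i) (hVy.trans hyS)
    exact ⟨u, huS, fun a ha => (hS_states u huS).2.1.generatedState_subset hV hVu (hxV a ha)⟩

theorem stmt12 {A : Type*} [DecidableEq A] (Con : A → Set (Finset A))
    (Ent : A → Finset A → A → Prop) (hF : IsInfoFrame Con Ent)
    (x y : Set A) (hx : IsState Con Ent x) (hy : IsState Con Ent y) :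
    (∀ S : Set (Set A), S.Nonempty → DirectedOn (· ⊆ ·) S →
        (∀ z ∈ S, IsState Con Ent z) → y ⊆ ⋃₀ S → ∃ u ∈ S, x ⊆ u) ↔
      (∃ (i : A) (V : Finset A), V ∈ Con i ∧ insert i (↑V : Set A) ⊆ y ∧
        ∀ a ∈ x, Ent i V a) :=
  stmt12_general Con Ent hF x y hy
end

section
/- Let 𝔻 be a continuous domain with basis B. Then the structure F(𝔻) on token set B, with CON_i = {{i}} ∪ {finite subsets of {b ∈ B : b ≪ i}} and X ⊨_i a defined by ∃b ∈ X ∪ {i}, a ≪ b, is an information frame; moreover it satisfies the strong condition: for all i ∈ B and X ∈ CON_i with X ≠ {i}, {i} ⊨_i X. -/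
/-- `x` is way below (approximates) `y`. -/
def WayBelow {D : Type*} [PartialOrder D] (x y : D) : Prop :=
  ∀ S : Set D, S.Nonempty → DirectedOn (· ≤ ·) S → ∀ s : D, IsLUB S s → y ≤ s →
    ∃ u ∈ S, x ≤ u

/-- `D` is directed complete. -/
def IsDcpo (D : Type*) [PartialOrder D] : Prop :=
  ∀ S : Set D, S.Nonempty → DirectedOn (· ≤ ·) S → ∃ s : D, IsLUB S s

/-- `B` is a basis of the dcpo `D`: every element is the least upper bound of a
directed set of basis elements way below it. -/
def IsBasis {D : Type*} [PartialOrder D] (B : Set D) : Prop :=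
  ∀ x : D, ∃ S : Set D, S ⊆ B ∧ (∀ b ∈ S, WayBelow b x) ∧ S.Nonempty ∧
    DirectedOn (· ≤ ·) S ∧ IsLUB S x

/-- The consistency predicates of the information frame `F(𝔻)` on the basis `B`. -/
def domCon {D : Type*} [PartialOrder D] (B : Set D) : ↥B → Set (Finset ↥B) :=
  fun i => {({i} : Finset ↥B)} ∪ {X : Finset ↥B | ∀ b ∈ X, WayBelow (b : D) (i : D)}

/-- The entailment relations of the information frame `F(𝔻)`:
`X ⊨ᵢ a` iff `a ≪ b` for some `b ∈ X ∪ {i}`. -/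
def domEnt {D : Type*} [PartialOrder D] [DecidableEq D] (B : Set D) :
    ↥B → Finset ↥B → ↥B → Prop :=
  fun i X a => ∃ b ∈ insert i X, WayBelow (a : D) (b : D)

section AuxLemmas

variable {D : Type*} [PartialOrder D]

lemma wayBelow_le {x y : D} (h : WayBelow x y) : x ≤ y := by
  obtain ⟨u, hu, hxu⟩ := h {y} ⟨y, rfl⟩
    (directedOn_singleton y) y isLUB_singleton le_rfl
  rcases hu with rfl
  exact hxu

lemma le_wayBelow {x y z : D} (hxy : x ≤ y) (h : WayBelow y z) : WayBelow x z := by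
  intro S hne hdir s hlub hzs
  obtain ⟨u, hu, hyu⟩ := h S hne hdir s hlub hzs
  exact ⟨u, hu, hxy.trans hyu⟩

lemma wayBelow_le' {x y z : D} (h : WayBelow x y) (hyz : y ≤ z) : WayBelow x z := by
  intro S hne hdir s hlub hzs
  exact h S hne hdir s hlub (hyz.trans hzs)

lemma directedOn_finset_bound {A : Set D}
    (hA : DirectedOn (· ≤ ·) A) (hne : A.Nonempty) (M : Finset D)
    (h : ∀ m ∈ M, ∃ a ∈ A, m ≤ a) : ∃ a ∈ A, ∀ m ∈ M, m ≤ a := by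
  classical
  induction M using Finset.induction with
  | empty =>
      obtain ⟨a, ha⟩ := hne
      exact ⟨a, ha, by simp⟩
  | @insert x s hx ih =>
      obtain ⟨a, haA, haM⟩ := ih (fun m hm => h m (Finset.mem_insert_of_mem hm))
      obtain ⟨b, hbA, hxb⟩ := h _ (Finset.mem_insert_self _ _)
      obtain ⟨c, hcA, hac, hbc⟩ := hA a haA b hbA
      refine ⟨c, hcA, fun m hm => ?_⟩
      rcases Finset.mem_insert.1 hm with rfl | hm
      · exact hxb.trans hbc
      · exact (haM m hm).trans hac

lemma basis_interpolation {B : Set D}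
    (hbasis : IsBasis B) (i : D) (M : Finset D)
    (hM : ∀ m ∈ M, WayBelow m i) :
    ∃ e ∈ B, WayBelow e i ∧ ∀ m ∈ M, WayBelow m e := by
  obtain ⟨S, hSB, hSwb, hSne, hSdir, hSlub⟩ := hbasis i
  choose T hTB hTwb hTne hTdir hTlub using hbasis
  set A : Set D := ⋃ s ∈ S, T s with hA
  have hmemA : ∀ a ∈ A, ∃ s ∈ S, a ∈ T s := fun a ha => by
    simpa using Set.mem_iUnion₂.1 ha
  have hmemA' : ∀ s ∈ S, ∀ a ∈ T s, a ∈ A := fun s hs a ha =>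
    Set.mem_iUnion₂.2 ⟨s, hs, ha⟩
  have hAne : A.Nonempty := by
    obtain ⟨s, hs⟩ := hSne
    obtain ⟨a, ha⟩ := hTne s
    exact ⟨a, hmemA' s hs a ha⟩
  have step : ∀ s ∈ S, ∀ a : D, WayBelow a s → ∃ u ∈ T s, a ≤ u := by
    intro s _ a haw
    exact haw (T s) (hTne s) (hTdir s) s (hTlub s) le_rfl
  have hAdir : DirectedOn (· ≤ ·) A := by
    rintro a1 ha1 a2 ha2
    obtain ⟨s1, hs1, ht1⟩ := hmemA a1 ha1
    obtain ⟨s2, hs2, ht2⟩ := hmemA a2 ha2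
    obtain ⟨s3, hs3, h13, h23⟩ := hSdir s1 hs1 s2 hs2
    obtain ⟨u1, hu1, hau1⟩ := step s3 hs3 a1 (wayBelow_le' (hTwb s1 a1 ht1) h13)
    obtain ⟨u2, hu2, hau2⟩ := step s3 hs3 a2 (wayBelow_le' (hTwb s2 a2 ht2) h23)
    obtain ⟨u, hu, h1u, h2u⟩ := hTdir s3 u1 hu1 u2 hu2
    exact ⟨u, hmemA' s3 hs3 u hu, hau1.trans h1u, hau2.trans h2u⟩
  have hAlub : IsLUB A i := by
    constructor
    · rintro a ha
      obtain ⟨s, hs, ht⟩ := hmemA a ha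
      exact (wayBelow_le (hTwb s a ht)).trans (wayBelow_le (hSwb s hs))
    · intro z hz
      exact hSlub.2 fun s hs => (hTlub s).2 fun a ha => hz (hmemA' s hs a ha)
  have hub : ∀ m ∈ M, ∃ a ∈ A, m ≤ a := fun m hm =>
    hM m hm A hAne hAdir i hAlub le_rfl
  obtain ⟨a, haA, hbound⟩ := directedOn_finset_bound hAdir hAne M hub
  obtain ⟨s, hs, ht⟩ := hmemA a haA
  exact ⟨s, hSB hs, hSwb s hs,
    fun m hm => le_wayBelow (hbound m hm) (hTwb s a ht)⟩

lemma mem_domCon_iff {B : Set D} {i : ↥B} {X : Finset ↥B} :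
    X ∈ domCon B i ↔ X = {i} ∨ ∀ b ∈ X, WayBelow (b : D) (i : D) := by
  simp [domCon, Set.mem_union]

lemma domEnt_wayBelow [DecidableEq D] {B : Set D} {i : ↥B}
    {X : Finset ↥B} (hX : X ∈ domCon B i) {a : ↥B} (h : domEnt B i X a) :
    WayBelow (a : D) (i : D) := by
  obtain ⟨b, hb, hab⟩ := h
  rcases Finset.mem_insert.1 hb with rfl | hbX
  · exact hab
  · rcases mem_domCon_iff.1 hX with rfl | hwb
    · rw [Finset.mem_singleton] at hbX
      subst hbX
      exact hab
    · exact wayBelow_le' hab (wayBelow_le (hwb b hbX))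

end AuxLemmas

theorem stmt14 {D : Type*} [PartialOrder D] [DecidableEq D] (B : Set D)
    (hdcpo : IsDcpo D) (hbasis : IsBasis B) :
    IsInfoFrame (domCon B) (domEnt B) ∧
      ∀ (i : ↥B) (X : Finset ↥B), X ∈ domCon B i → X ≠ {i} →
        ∀ a ∈ X, domEnt B i {i} a := by
  constructor
  · constructor
    -- self_con
    · intro i
      exact mem_domCon_iff.2 (Or.inl rfl)
    -- con_down
    · intro i X Y hYX hX
      rcases mem_domCon_iff.1 hX with rfl | hwb
      · rcases Finset.subset_singleton_iff.1 hYX with rfl | rfl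
        · exact mem_domCon_iff.2 (Or.inr (by simp))
        · exact mem_domCon_iff.2 (Or.inl rfl)
      · exact mem_domCon_iff.2 (Or.inr fun b hb => hwb b (hYX hb))
    -- sound
    · intro i X Y hX hY
      exact mem_domCon_iff.2 (Or.inr fun b hb => domEnt_wayBelow hX (hY b hb))
    -- weaken
    · rintro i X Y a - - hXY ⟨b, hb, hab⟩
      refine ⟨b, ?_, hab⟩
      rcases Finset.mem_insert.1 hb with rfl | h
      · exact Finset.mem_insert_self _ _
      · exact Finset.mem_insert_of_mem (hXY h)
    -- cut
    · intro i X Y a hX hY hYa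
      obtain ⟨b, hb, hab⟩ := hYa
      rcases Finset.mem_insert.1 hb with rfl | hbY
      · exact ⟨b, Finset.mem_insert_self _ _, hab⟩
      · obtain ⟨c, hc, hbc⟩ := hY b hbY
        exact ⟨c, hc, wayBelow_le' hab (wayBelow_le hbc)⟩
    -- con_transfer
    · intro i j hij X hX
      rcases mem_domCon_iff.1 hij with h | h
      · obtain rfl : i = j := Finset.singleton_inj.1 h
        exact hX
      · have hiwb : WayBelow (i : D) (j : D) := h i (Finset.mem_singleton_self i)
        rcases mem_domCon_iff.1 hX with rfl | hwb
        · exact hij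
        · exact mem_domCon_iff.2
            (Or.inr fun b hb => wayBelow_le' (hwb b hb) (wayBelow_le hiwb))
    -- ent_transfer
    · rintro i j X a hij hX ⟨b, hb, hab⟩
      rcases Finset.mem_insert.1 hb with rfl | hbX
      · rcases mem_domCon_iff.1 hij with h | h
        · exact ⟨j, Finset.mem_insert_self _ _, Finset.singleton_inj.1 h ▸ hab⟩
        · exact ⟨j, Finset.mem_insert_self _ _,
            wayBelow_le' hab (wayBelow_le (h b (Finset.mem_singleton_self b)))⟩
      · exact ⟨b, Finset.mem_insert_of_mem hbX, hab⟩
    -- interp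
    · intro i X Y hX hY
      have hYwb : ∀ b ∈ Y, WayBelow (b : D) (i : D) := fun b hb =>
        domEnt_wayBelow hX (hY b hb)
      obtain ⟨e, heB, hei, hwb⟩ := basis_interpolation hbasis (i : D)
        (Y.image Subtype.val) (by
          rintro m hm
          obtain ⟨b, hb, rfl⟩ := Finset.mem_image.1 hm
          exact hYwb b hb)
      refine ⟨⟨e, heB⟩, Y,
        mem_domCon_iff.2 (Or.inr fun b hb => hwb b (Finset.mem_image_of_mem _ hb)),
        ?_, ?_⟩
      · intro b hb
        rcases Finset.mem_insert.1 hb with rfl | hbY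
        · exact ⟨i, Finset.mem_insert_self _ _, hei⟩
        · exact hY b hbY
      · intro b hb
        exact ⟨⟨e, heB⟩, Finset.mem_insert_self _ _,
          hwb b (Finset.mem_image_of_mem _ hb)⟩
  · intro i X hX hne a ha
    rcases mem_domCon_iff.1 hX with rfl | hwb
    · exact absurd rfl hne
    · exact ⟨i, Finset.mem_insert_self _ _, hwb a ha⟩
end

section
/- Every global state of the information frame F(𝔻) derived from a domain 𝔻 with basis B is a directed subset of 𝔻. -/
theorem WayBelow.le {D : Type*} [PartialOrder D] {a b : D} (h : WayBelow a b) : a ≤ b := by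
  obtain ⟨u, hu, hau⟩ :=
    h {b} (Set.singleton_nonempty b) (directedOn_singleton b) b isLUB_singleton le_rfl
  rwa [Set.mem_singleton_iff.mp hu] at hau

theorem le_of_mem_domCon {D : Type*} [PartialOrder D] {B : Set D} {i : B} {X : Finset B}
    (hX : X ∈ domCon B i) {b : B} (hb : b ∈ X) : (b : D) ≤ i := by
  rcases hX with hX | hX
  · rw [Set.mem_singleton_iff.mp hX, Finset.mem_singleton] at hb
    exact hb ▸ le_rfl
  · exact (hX b hb).le

theorem FinConsistent.nonempty_domCon {D : Type*} [PartialOrder D] {B : Set D} {x : Set B}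
    (hx : FinConsistent (domCon B) x) : (Subtype.val '' x).Nonempty := by
  obtain ⟨i, hi, -⟩ := hx ∅ (by simp)
  exact ⟨i, i, hi, rfl⟩

theorem FinConsistent.directedOn_domCon {D : Type*} [PartialOrder D] {B : Set D} {x : Set B}
    (hx : FinConsistent (domCon B) x) : DirectedOn (· ≤ ·) (Subtype.val '' x) := by
  classical
  rintro _ ⟨a, ha, rfl⟩ _ ⟨b, hb, rfl⟩
  obtain ⟨i, hi, hab⟩ := hx {a, b} (by simp [Set.insert_subset_iff, ha, hb])
  exact ⟨i, ⟨i, hi, rfl⟩, le_of_mem_domCon hab (by simp), le_of_mem_domCon hab (by simp)⟩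

theorem stmt15_general {D : Type*} [PartialOrder D] [DecidableEq D] (B : Set D)
    (x : Set ↥B) (hx : IsState (domCon B) (domEnt B) x) :
    (Subtype.val '' x).Nonempty ∧ DirectedOn (· ≤ ·) (Subtype.val '' x) :=
  ⟨hx.1.nonempty_domCon, hx.1.directedOn_domCon⟩

theorem stmt15 {D : Type*} [PartialOrder D] [DecidableEq D] (B : Set D)
    (hdcpo : IsDcpo D) (hbasis : IsBasis B)
    (x : Set ↥B) (hx : IsState (domCon B) (domEnt B) x) :
    (Subtype.val '' x).Nonempty ∧ DirectedOn (· ≤ ·) (Subtype.val '' x) :=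
  stmt15_general B x hx
end

section
/- Let 𝕌 = (U, Θ, 𝔉) be a CF-approximation space. Then the structure C(𝕌) with token set 𝔉, CON_F = {𝔉-family {F}} ∪ {finite 𝔛 ⊆ 𝔉 : every G ∈ 𝔛 satisfies G ⊆ Θ̄(F)}, and entailment 𝔛 ⊩_F G iff G ⊆ Θ̄(E) for some E ∈ 𝔛 ∪ {F}, is an information frame satisfying all the information-frame axioms including global interpolation. -/
/-- Upper approximation operator. -/
def upperApprox {U : Type*} (Θ : U → U → Prop) (X : Set U) : Set U :=
  {x | ∃ y ∈ X, Θ x y}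

/-- The CF-interpolation condition on a family `𝔉` of finite subsets. -/
def CFCondition {U : Type*} (Θ : U → U → Prop) (𝔉 : Set (Finset U)) : Prop :=
  ∀ F ∈ 𝔉, ∀ K : Finset U, ↑K ⊆ upperApprox Θ ↑F →
    ∃ G ∈ 𝔉, ↑K ⊆ upperApprox Θ ↑G ∧ (↑G : Set U) ⊆ upperApprox Θ ↑F

/-- The consistency predicates of the information frame `C(𝕌)` with tokens `𝔉`. -/
def cfCon {U : Type*} (Θ : U → U → Prop) (𝔉 : Set (Finset U)) :
    {F : Finset U // F ∈ 𝔉} → Set (Finset {F : Finset U // F ∈ 𝔉}) :=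
  fun F => {({F} : Finset {F : Finset U // F ∈ 𝔉})} ∪
    {𝔛 | ∀ G ∈ 𝔛, (↑(G : {F : Finset U // F ∈ 𝔉}).val : Set U) ⊆ upperApprox Θ ↑F.val}

/-- The entailment relations of `C(𝕌)`: `𝔛 ⊩_F G` iff `G ⊆ Θ̄(E)` for some
`E ∈ 𝔛 ∪ {F}`. -/
def cfEnt {U : Type*} [DecidableEq U] (Θ : U → U → Prop) (𝔉 : Set (Finset U)) :
    {F : Finset U // F ∈ 𝔉} → Finset {F : Finset U // F ∈ 𝔉} →
      {F : Finset U // F ∈ 𝔉} → Prop :=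
  fun F 𝔛 G => ∃ E ∈ insert F 𝔛, (↑G.val : Set U) ⊆ upperApprox Θ ↑E.val

/-!
Write `G ≤ F` for `G ⊆ Θ̄(F)`; transitivity of `Θ` makes `≤` transitive. Every token entailed
from an `F`-consistent family lies below `F`, and conversely everything below `F` is entailed,
so all axioms except interpolation reduce to transitivity of `≤`. For interpolation, the union
`K` of the entailed tokens is a finite subset of `Θ̄(F)`, and the CF-condition yields a token
`G ≤ F` with `K ⊆ Θ̄(G)`: take `e = G` and `Z = ∅`.
-/

theorem upperApprox_subset_of_subset {U : Type*} {Θ : U → U → Prop} (hT : Transitive Θ)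
    {A B : Set U} (h : A ⊆ upperApprox Θ B) : upperApprox Θ A ⊆ upperApprox Θ B := by
  rintro x ⟨y, hy, hxy⟩
  obtain ⟨z, hz, hyz⟩ := h hy
  exact ⟨z, hz, hT hxy hyz⟩

theorem subset_upperApprox_trans {U : Type*} {Θ : U → U → Prop} (hT : Transitive Θ)
    {A B C : Set U} (hAB : A ⊆ upperApprox Θ B) (hBC : B ⊆ upperApprox Θ C) :
    A ⊆ upperApprox Θ C :=
  hAB.trans (upperApprox_subset_of_subset hT hBC)

theorem CFCondition.exists_interpolant {U : Type*} [DecidableEq U] {Θ : U → U → Prop}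
    {𝔉 : Set (Finset U)} (hCF : CFCondition Θ 𝔉) {F : Finset U} (hF : F ∈ 𝔉) {ι : Type*}
    (Y : Finset ι) (f : ι → Finset U) (hY : ∀ b ∈ Y, (↑(f b) : Set U) ⊆ upperApprox Θ ↑F) :
    ∃ G ∈ 𝔉, (∀ b ∈ Y, (↑(f b) : Set U) ⊆ upperApprox Θ ↑G) ∧
      (↑G : Set U) ⊆ upperApprox Θ ↑F := by
  have hK : (↑(Y.biUnion f) : Set U) ⊆ upperApprox Θ ↑F := by
    simpa only [Finset.coe_biUnion, Set.iUnion₂_subset_iff, Finset.mem_coe] using hY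
  obtain ⟨G, hG, hKG, hGF⟩ := hCF F hF _ hK
  exact ⟨G, hG, fun b hb => (Finset.coe_subset.mpr (Finset.subset_biUnion_of_mem f hb)).trans hKG,
    hGF⟩

section CFInfoFrame

variable {U : Type*} {Θ : U → U → Prop} {𝔉 : Set (Finset U)}
  {i j a : {F : Finset U // F ∈ 𝔉}} {X Y : Finset {F : Finset U // F ∈ 𝔉}}

theorem mem_cfCon_iff :
    X ∈ cfCon Θ 𝔉 i ↔ X = {i} ∨ ∀ G ∈ X, (↑G.val : Set U) ⊆ upperApprox Θ ↑i.val :=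
  Iff.rfl

theorem singleton_mem_cfCon_iff :
    {i} ∈ cfCon Θ 𝔉 j ↔ i = j ∨ (↑i.val : Set U) ⊆ upperApprox Θ ↑j.val := by
  simp only [mem_cfCon_iff, Finset.singleton_inj, Finset.mem_singleton, forall_eq]

theorem mem_cfCon_of_subset (hYX : Y ⊆ X) (hX : X ∈ cfCon Θ 𝔉 i) : Y ∈ cfCon Θ 𝔉 i := by
  rcases hX with rfl | hX
  · rcases Finset.subset_singleton_iff.mp hYX with rfl | rfl
    · exact Or.inr fun G hG => absurd hG (Finset.notMem_empty G)
    · exact Or.inl rfl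
  · exact Or.inr fun G hG => hX G (hYX hG)

theorem cfCon_subset_of_subset (hT : Transitive Θ)
    (hij : (↑i.val : Set U) ⊆ upperApprox Θ ↑j.val) : cfCon Θ 𝔉 i ⊆ cfCon Θ 𝔉 j := by
  rintro X (rfl | hX)
  · exact singleton_mem_cfCon_iff.mpr (Or.inr hij)
  · exact Or.inr fun G hG => subset_upperApprox_trans hT (hX G hG) hij

theorem cfCon_subset_of_singleton_mem (hT : Transitive Θ) (hij : {i} ∈ cfCon Θ 𝔉 j) :
    cfCon Θ 𝔉 i ⊆ cfCon Θ 𝔉 j := by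
  rcases singleton_mem_cfCon_iff.mp hij with rfl | hij
  · exact subset_rfl
  · exact cfCon_subset_of_subset hT hij

variable [DecidableEq U]

theorem cfEnt_of_subset (h : (↑a.val : Set U) ⊆ upperApprox Θ ↑i.val) : cfEnt Θ 𝔉 i X a :=
  ⟨i, Finset.mem_insert_self i X, h⟩

theorem cfEnt_mono (hXY : X ⊆ Y) (h : cfEnt Θ 𝔉 i X a) : cfEnt Θ 𝔉 i Y a :=
  let ⟨E, hE, haE⟩ := h
  ⟨E, Finset.insert_subset_insert i hXY hE, haE⟩

theorem subset_upperApprox_of_cfEnt (hT : Transitive Θ) (hX : X ∈ cfCon Θ 𝔉 i)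
    (h : cfEnt Θ 𝔉 i X a) : (↑a.val : Set U) ⊆ upperApprox Θ ↑i.val := by
  obtain ⟨E, hE, haE⟩ := h
  rcases Finset.mem_insert.mp hE with rfl | hE
  · exact haE
  rcases hX with rfl | hX
  · rwa [Finset.mem_singleton.mp hE] at haE
  · exact subset_upperApprox_trans hT haE (hX E hE)

theorem cfEnt_cut (hT : Transitive Θ) (hX : X ∈ cfCon Θ 𝔉 i) (hY : ∀ b ∈ Y, cfEnt Θ 𝔉 i X b)
    (h : cfEnt Θ 𝔉 i Y a) : cfEnt Θ 𝔉 i X a := by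
  obtain ⟨E, hE, haE⟩ := h
  refine cfEnt_of_subset ?_
  rcases Finset.mem_insert.mp hE with rfl | hE
  · exact haE
  · exact subset_upperApprox_trans hT haE (subset_upperApprox_of_cfEnt hT hX (hY E hE))

theorem cfEnt_of_singleton_mem (hT : Transitive Θ) (hij : {i} ∈ cfCon Θ 𝔉 j)
    (h : cfEnt Θ 𝔉 i X a) : cfEnt Θ 𝔉 j X a := by
  obtain ⟨E, hE, haE⟩ := h
  rcases Finset.mem_insert.mp hE with rfl | hE
  · rcases singleton_mem_cfCon_iff.mp hij with rfl | hij
    · exact cfEnt_of_subset haE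
    · exact cfEnt_of_subset (subset_upperApprox_trans hT haE hij)
  · exact ⟨E, Finset.mem_insert_of_mem hE, haE⟩

theorem cfEnt_interpolate (hT : Transitive Θ) (hCF : CFCondition Θ 𝔉) (hX : X ∈ cfCon Θ 𝔉 i)
    (hY : ∀ b ∈ Y, cfEnt Θ 𝔉 i X b) :
    ∃ (e : {F : Finset U // F ∈ 𝔉}) (Z : Finset {F : Finset U // F ∈ 𝔉}),
      Z ∈ cfCon Θ 𝔉 e ∧ (∀ b ∈ insert e Z, cfEnt Θ 𝔉 i X b) ∧ ∀ b ∈ Y, cfEnt Θ 𝔉 e Z b := by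
  obtain ⟨G, hG, hYG, hGi⟩ := hCF.exists_interpolant i.property Y Subtype.val
    fun b hb => subset_upperApprox_of_cfEnt hT hX (hY b hb)
  refine ⟨⟨G, hG⟩, ∅, Or.inr fun _ h => absurd h (Finset.notMem_empty _), ?_,
    fun b hb => cfEnt_of_subset (hYG b hb)⟩
  intro b hb
  rw [insert_empty_eq, Finset.mem_singleton] at hb
  exact hb ▸ cfEnt_of_subset hGi

end CFInfoFrame

theorem stmt17 {U : Type*} [DecidableEq U] (Θ : U → U → Prop) (𝔉 : Set (Finset U))
    (hT : Transitive Θ) (hCF : CFCondition Θ 𝔉) :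
    IsInfoFrame (cfCon Θ 𝔉) (cfEnt Θ 𝔉) :=
  { self_con := fun _ => Or.inl rfl
    con_down := fun _ _ _ => mem_cfCon_of_subset
    sound := fun _ _ _ hX hY => Or.inr fun b hb => subset_upperApprox_of_cfEnt hT hX (hY b hb)
    weaken := fun _ _ _ _ _ _ => cfEnt_mono
    cut := fun _ _ _ _ => cfEnt_cut hT
    con_transfer := fun _ _ => cfCon_subset_of_singleton_mem hT
    ent_transfer := fun _ _ _ _ hij _ => cfEnt_of_singleton_mem hT hij
    interp := fun _ _ _ => cfEnt_interpolate hT hCF }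
end

section
/- Let 𝔸 be an information frame. Define U = {(X, i) : i ∈ A, X ∈ Con_i}, the relation (X, i) Θ (Y, j) iff Y ⊢_j ({i} ∪ X), and 𝔉 = {singletons {(X, i)} : (X, i) ∈ U}. Then (U, Θ, 𝔉) is a CF-approximation space: Θ is transitive and for every F ∈ 𝔉 and finite K ⊆ Θ̄(F) there is G ∈ 𝔉 with K ⊆ Θ̄(G) and G ⊆ Θ̄(F). -/
/-- The points of the CF-approximation space `E(𝔸)`: pairs `(X, i)` with `X ∈ Con i`. -/
def FramePoint {A : Type*} (Con : A → Set (Finset A)) : Type _ :=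
  {p : Finset A × A // p.1 ∈ Con p.2}

/-- The relation of `E(𝔸)`: `(X, i) Θ (Y, j)` iff `Y ⊢ⱼ {i} ∪ X`. -/
def frameTheta {A : Type*} [DecidableEq A] (Con : A → Set (Finset A))
    (Ent : A → Finset A → A → Prop) :
    FramePoint Con → FramePoint Con → Prop :=
  fun u v => ∀ b ∈ insert u.val.2 u.val.1, Ent v.val.2 v.val.1 b

/-- The family of `E(𝔸)`: all singletons. -/
def frameFam {A : Type*} (Con : A → Set (Finset A)) : Set (Finset (FramePoint Con)) :=
  {F | ∃ u : FramePoint Con, F = {u}}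

theorem stmt18 {A : Type*} [DecidableEq A] (Con : A → Set (Finset A))
    (Ent : A → Finset A → A → Prop) (hF : IsInfoFrame Con Ent) :
    Transitive (frameTheta Con Ent) ∧
      CFCondition (frameTheta Con Ent) (frameFam Con) := by
  constructor
  · intro u v w huv hvw b hb
    have hjk : ({v.val.2} : Finset A) ∈ Con w.val.2 := by
      apply hF.sound _ w.val.1 _ w.2
      intro c hc
      rw [Finset.mem_singleton] at hc; subst hc
      exact hvw _ (Finset.mem_insert_self _ _)
    have hb' : Ent w.val.2 v.val.1 b :=
      hF.ent_transfer v.val.2 w.val.2 v.val.1 b hjk v.2 (huv b hb)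
    exact hF.cut w.val.2 w.val.1 v.val.1 b w.2
      (fun c hc => hvw c (Finset.mem_insert_of_mem hc)) hb'
  · rintro F ⟨u, rfl⟩ K hK
    have hKΘ : ∀ k ∈ K, frameTheta Con Ent k u := by
      intro k hk
      obtain ⟨y, hy, hΘ⟩ := hK (Finset.mem_coe.mpr hk)
      simp only [Finset.coe_singleton, Set.mem_singleton_iff] at hy
      subst hy; exact hΘ
    classical
    set Y : Finset A := K.biUnion (fun k => insert k.val.2 k.val.1) with hY
    have hEnt : ∀ b ∈ Y, Ent u.val.2 u.val.1 b := by
      intro b hb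
      rw [hY, Finset.mem_biUnion] at hb
      obtain ⟨k, hk, hbk⟩ := hb
      exact hKΘ k hk b hbk
    obtain ⟨e, Z, hZ, h1, h2⟩ := hF.interp u.val.2 u.val.1 Y u.2 hEnt
    refine ⟨{⟨(Z, e), hZ⟩}, ⟨_, rfl⟩, ?_, ?_⟩
    · intro k hk
      rw [Finset.mem_coe] at hk
      refine ⟨⟨(Z, e), hZ⟩, Finset.mem_coe.mpr (Finset.mem_singleton_self _), ?_⟩
      intro b hb
      exact h2 b (Finset.mem_biUnion.mpr ⟨k, hk, hb⟩)
    · intro g hg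
      replace hg := Finset.mem_singleton.mp (Finset.mem_coe.mp hg)
      subst hg
      exact ⟨u, by simp, h1⟩
end
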